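/- For every fixed 0 < a < b < 1, the function s ↦ b · a^{(1+s)/(2s)} (1−a)^{−1/(2s)} [ (1−b)^{1/(2s)} b^{−(1+s)/(2s)} + ∫_a^b (1−x)^{1/(2s)} x^{−(1+s)/(2s)} (1/2 + 1/(2s(1−x))) dx ] is nondecreasing on (0,∞). -/

import Mathlib

/-- The integral `∫_a^y (1−x)^{1/(2s)} x^{−(1+s)/(2s)} (1/2 + 1/(2s(1−x))) dx`. -/
noncomputable def intI (s a y : ℝ) : ℝ :=
  ∫ x in a..y, (1 - x) ^ (1 / (2 * s)) / x ^ ((1 + s) / (2 * s)) *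
    (1 / 2 + 1 / (2 * s) * (1 / (1 - x)))

/-!
Write `c = 1/(2s)` and `f(x) = (1−x)^c x^{−(c+1/2)}`, so the integrand is `f(x)(1/2 + c/(1−x))`.
Since `f(x)(1/2 − c/(1−x))` is the derivative of `x f(x)`, integrating the difference turns the
weight into `b (a + (1−b) f(b)/f(a) + ∫_a^b f(x)/f(a) dx)`. Now
`f(x)/f(a) = (a/x)^{c+1/2} ((1−x)/(1−a))^c` is a product of powers of numbers in `(0,1]`, so it
is nonincreasing in `c`, i.e. nondecreasing in `s`.
-/

open Real Set intervalIntegral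

/-- With `c = 1/(2s)`, the factor `(1−x)^{1/(2s)} x^{−(1+s)/(2s)}` of the integrand of `intI`. -/
noncomputable def weightDensity (c x : ℝ) : ℝ := (1 - x) ^ c / x ^ (c + 1 / 2)

lemma weightDensity_pos (c : ℝ) {x : ℝ} (hx0 : 0 < x) (hx1 : x < 1) :
    0 < weightDensity c x := by
  have : 0 < 1 - x := sub_pos.2 hx1
  unfold weightDensity
  positivity

lemma continuousOn_weightDensity (c : ℝ) {a b : ℝ} (ha : 0 < a) (hb : b < 1) :
    ContinuousOn (weightDensity c) (Icc a b) := by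
  refine ContinuousOn.div ?_ ?_ fun x hx => (rpow_pos_of_pos (ha.trans_le hx.1) _).ne'
  · exact ContinuousOn.rpow_const (by fun_prop) fun x hx =>
      Or.inl (sub_pos.2 (hx.2.trans_lt hb)).ne'
  · exact ContinuousOn.rpow_const (by fun_prop) fun x hx => Or.inl (ha.trans_le hx.1).ne'

lemma rpow_half_sub_eq_div (c : ℝ) {x : ℝ} (hx : 0 < x) :
    x ^ (1 / 2 - c) = x / x ^ (c + 1 / 2) := by
  rw [show 1 / 2 - c = 1 - (c + 1 / 2) by ring, rpow_sub hx, rpow_one]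

lemma hasDerivAt_mul_weightDensity (c : ℝ) {x : ℝ} (hx0 : 0 < x) (hx1 : x < 1) :
    HasDerivAt (fun y => y * weightDensity c y)
      (weightDensity c x * (1 / 2 - c / (1 - x))) x := by
  have h1x : 0 < 1 - x := sub_pos.2 hx1
  have hd : HasDerivAt (fun y => (1 - y) ^ c * y ^ (1 / 2 - c))
      (-1 * c * (1 - x) ^ (c - 1) * x ^ (1 / 2 - c) +
        (1 - x) ^ c * ((1 / 2 - c) * x ^ (1 / 2 - c - 1))) x :=
    (((hasDerivAt_id x).const_sub 1).rpow_const (Or.inl h1x.ne')).mul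
      (hasDerivAt_rpow_const (Or.inl hx0.ne'))
  refine (hd.congr_of_eventuallyEq ?_).congr_deriv ?_
  · filter_upwards [lt_mem_nhds hx0] with y hy
    rw [weightDensity, rpow_half_sub_eq_div c hy]
    ring
  · have : 0 < x ^ (c + 1 / 2) := rpow_pos_of_pos hx0 _
    rw [rpow_sub h1x c 1, rpow_sub hx0 (1 / 2 - c) 1, rpow_one, rpow_one,
      rpow_half_sub_eq_div c hx0, weightDensity]
    field_simp
    ring

lemma integral_weightDensity_mul_add (c : ℝ) {a b : ℝ} (ha : 0 < a) (hab : a ≤ b) (hb : b < 1) :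
    ∫ x in a..b, weightDensity c x * (1 / 2 + c * (1 / (1 - x))) =
      a * weightDensity c a - b * weightDensity c b + ∫ x in a..b, weightDensity c x := by
  have hIcc : uIcc a b = Icc a b := uIcc_of_le hab
  have hf : ContinuousOn (weightDensity c) (uIcc a b) :=
    hIcc ▸ continuousOn_weightDensity c ha hb
  have hg : ContinuousOn (fun x => 1 / 2 - c / (1 - x)) (uIcc a b) :=
    continuousOn_const.sub <| continuousOn_const.div (by fun_prop) fun x hx =>
      (sub_pos.2 ((hIcc ▸ hx).2.trans_lt hb)).ne'
  have hftc : ∫ x in a..b, weightDensity c x * (1 / 2 - c / (1 - x)) =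
      b * weightDensity c b - a * weightDensity c a :=
    integral_eq_sub_of_hasDerivAt (fun x hx => hasDerivAt_mul_weightDensity c
      (ha.trans_le (hIcc ▸ hx).1) ((hIcc ▸ hx).2.trans_lt hb)) (hf.mul hg).intervalIntegrable
  calc _ = ∫ x in a..b, (weightDensity c x - weightDensity c x * (1 / 2 - c / (1 - x))) :=
        integral_congr fun x _ => by ring
    _ = _ := by
        rw [integral_sub (g := fun x => weightDensity c x * (1 / 2 - c / (1 - x)))
          hf.intervalIntegrable (hf.mul hg).intervalIntegrable, hftc]
        ring

lemma weightDensity_div_weightDensity (c : ℝ) {a x : ℝ} (ha : 0 < a) (hax : a ≤ x) (hx : x < 1) :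
    weightDensity c x / weightDensity c a = (a / x) ^ (c + 1 / 2) * ((1 - x) / (1 - a)) ^ c := by
  have hx0 : 0 < x := ha.trans_le hax
  have h1x : 0 < 1 - x := sub_pos.2 hx
  have h1a : 0 < 1 - a := by linarith
  have : 0 < a ^ (c + 1 / 2) := rpow_pos_of_pos ha _
  have : 0 < x ^ (c + 1 / 2) := rpow_pos_of_pos hx0 _
  have : 0 < (1 - a) ^ c := rpow_pos_of_pos h1a _
  rw [div_rpow ha.le hx0.le, div_rpow h1x.le h1a.le, weightDensity, weightDensity]
  field_simp

lemma antitone_weightDensity_div {a x : ℝ} (ha : 0 < a) (hax : a ≤ x) (hx : x < 1) :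
    Antitone fun c => weightDensity c x / weightDensity c a := by
  intro c c' hcc'
  have hx0 : 0 < x := ha.trans_le hax
  have hax0 : 0 < a / x := div_pos ha hx0
  have hxa : 0 < (1 - x) / (1 - a) := div_pos (sub_pos.2 hx) (by linarith)
  simp only [weightDensity_div_weightDensity _ ha hax hx]
  exact mul_le_mul
    (rpow_le_rpow_of_exponent_ge hax0 ((div_le_one hx0).2 hax) (by linarith))
    (rpow_le_rpow_of_exponent_ge hxa ((div_le_one (by linarith)).2 (by linarith)) hcc')
    (rpow_nonneg hxa.le _) (rpow_nonneg hax0.le _)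

noncomputable def limitingWeight (a b c : ℝ) : ℝ :=
  b * (a + (1 - b) * (weightDensity c b / weightDensity c a) +
    ∫ x in a..b, weightDensity c x / weightDensity c a)

lemma antitone_limitingWeight {a b : ℝ} (ha : 0 < a) (hab : a ≤ b) (hb : b < 1) :
    Antitone (limitingWeight a b) := by
  intro c c' hcc'
  have hρ : ∀ x ∈ Icc a b, weightDensity c' x / weightDensity c' a ≤
      weightDensity c x / weightDensity c a := fun x hx =>
    antitone_weightDensity_div ha hx.1 (hx.2.trans_lt hb) hcc'
  have hint : ∀ c, IntervalIntegrable (fun x => weightDensity c x / weightDensity c a)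
      MeasureTheory.volume a b := fun c =>
    ((continuousOn_weightDensity c ha hb).div_const _).intervalIntegrable_of_Icc hab
  unfold limitingWeight
  have hb0 : 0 ≤ b := ha.le.trans hab
  have h1b : 0 ≤ 1 - b := by linarith
  gcongr b * (a + (1 - b) * ?_ + ?_)
  · exact hρ b ⟨hab, le_rfl⟩
  · exact integral_mono_on hab (hint c') (hint c) hρ

lemma eq_limitingWeight {a b s : ℝ} (ha : 0 < a) (hab : a ≤ b) (hb : b < 1) (hs : s ≠ 0) :
    b * (a ^ ((1 + s) / (2 * s)) / (1 - a) ^ (1 / (2 * s))) *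
        ((1 - b) ^ (1 / (2 * s)) / b ^ ((1 + s) / (2 * s)) + intI s a b) =
      limitingWeight a b (1 / (2 * s)) := by
  have hexp : (1 + s) / (2 * s) = 1 / (2 * s) + 1 / 2 := by field_simp
  rw [intI, hexp]
  set c := 1 / (2 * s)
  have hfa : 0 < weightDensity c a := weightDensity_pos c ha (hab.trans_lt hb)
  simp only [← weightDensity.eq_1]
  rw [integral_weightDensity_mul_add c ha hab hb, limitingWeight, integral_div,
    ← inv_div, ← weightDensity]
  field_simp
  ring

/-- For fixed `0 < a < b < 1`, the limiting genetic weight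
`b ⬝ a^{(1+s)/(2s)} (1−a)^{−1/(2s)} [(1−b)^{1/(2s)} b^{−(1+s)/(2s)} + ∫_a^b ⋯ dx]`
is a nondecreasing function of the selection strength `s` on `(0,∞)`. -/
theorem limiting_weight_monotone_in_selection
    (a b : ℝ) (ha : 0 < a) (hab : a < b) (hb : b < 1) :
    MonotoneOn (fun s : ℝ =>
        b * (a ^ ((1 + s) / (2 * s)) / (1 - a) ^ (1 / (2 * s))) *
          ((1 - b) ^ (1 / (2 * s)) / b ^ ((1 + s) / (2 * s)) + intI s a b))
      (Set.Ioi 0) := by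
  intro s (hs : 0 < s) t (ht : 0 < t) hst
  simp only [eq_limitingWeight ha hab.le hb hs.ne', eq_limitingWeight ha hab.le hb ht.ne']
  exact antitone_limitingWeight ha hab.le hb (by gcongr)
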